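/- arXiv:2602.14126 — 3 statements merged into one kernel-verified Lean document; each statement's English description precedes it below -/
import Mathlib

section
/- For every natural number N and every real number λ such that He_{N+1}(√2·λ) = 0, the vector v ∈ ℂ^{N+1} with components v_k = He_k(√2·λ)/√(k!) for k = 0, …, N is an eigenvector of the position matrix Q_N with eigenvalue λ; that is, Q_N · v = λ·v and v ≠ 0. -/
open Matrix Polynomial

/-! With `v_k = He_k(x) / √(k!)`, the recurrence `He_{k+1} = x He_k - k He_{k-1}` becomes
`√k v_{k-1} + √(k+1) v_{k+1} = x v_k`, which is row `k` of `√2 Q_N v = x v`. In the last row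
the term `√(N+1) v_{N+1}` lies outside the truncated matrix; it vanishes because
`He_{N+1}(x) = 0`. Finally `v_0 = 1`, so `v ≠ 0`. -/

/-- Heisenberg's tridiagonal position matrix `Q_N` of size `(N+1) × (N+1)`:
`Q_{j,k} = (√(k+1)·δ_{j,k+1} + √k·δ_{j,k-1}) / √2`. -/
noncomputable def Qmat (N : ℕ) : Matrix (Fin (N+1)) (Fin (N+1)) ℂ :=
  Matrix.of fun j k =>
    (((1 / Real.sqrt 2) *
        (Real.sqrt ((k : ℕ) + 1) * (if (j : ℕ) = (k : ℕ) + 1 then 1 else 0) +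
         Real.sqrt (k : ℕ) * (if (j : ℕ) + 1 = (k : ℕ) then 1 else 0)) : ℝ) : ℂ)

/-- Heisenberg's tridiagonal momentum matrix `P_N` of size `(N+1) × (N+1)`:
`P_{j,k} = (i/√2)·(√(k+1)·δ_{j,k+1} − √k·δ_{j,k-1})`. -/
noncomputable def Pmat (N : ℕ) : Matrix (Fin (N+1)) (Fin (N+1)) ℂ :=
  Matrix.of fun j k =>
    (Complex.I / (Real.sqrt 2 : ℂ)) *
      ((Real.sqrt ((k : ℕ) + 1) : ℂ) * (if (j : ℕ) = (k : ℕ) + 1 then 1 else 0) -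
       (Real.sqrt (k : ℕ) : ℂ) * (if (j : ℕ) + 1 = (k : ℕ) then 1 else 0))

/-- The action difference `D_N = (Q_N P_N − P_N Q_N)/i`. -/
noncomputable def Dmat (N : ℕ) : Matrix (Fin (N+1)) (Fin (N+1)) ℂ :=
  Complex.I⁻¹ • (Qmat N * Pmat N - Pmat N * Qmat N)

namespace Polynomial

theorem derivative_hermite_succ (n : ℕ) :
    derivative (hermite (n + 1)) = (n + 1 : ℕ) • hermite n := by
  induction n with
  | zero => simp [hermite_succ]
  | succ n ih =>
    rw [hermite_succ (n + 1), derivative_sub, derivative_mul, derivative_X, ih, derivative_smul,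
      hermite_succ n]
    ring_nf

theorem hermite_add_two (n : ℕ) :
    hermite (n + 2) = X * hermite (n + 1) - (n + 1 : ℕ) • hermite n := by
  rw [hermite_succ (n + 1), derivative_hermite_succ]

end Polynomial

theorem Finset.sum_range_ite_eq_add_one {M : Type*} [AddCommMonoid M] (f : ℕ → M) (hf : f 0 = 0)
    {n j : ℕ} (hj : j ≤ n + 1) :
    ∑ k ∈ range (n + 1), (if j = k + 1 then f (k + 1) else 0) = f j := by
  have := sum_range_succ' (fun k => if j = k then f k else 0) (n + 1)
  rw [sum_ite_eq, if_pos (mem_range.2 (by omega))] at this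
  simpa [hf] using this.symm

theorem Finset.sum_range_ite_add_one_eq {M : Type*} [AddCommMonoid M] (f : ℕ → M) {n j : ℕ}
    (hf : f (n + 1) = 0) (hj : j ≤ n) :
    ∑ k ∈ range (n + 1), (if j + 1 = k then f k else 0) = f (j + 1) := by
  have := sum_range_succ (fun k => if j + 1 = k then f k else 0) (n + 1)
  rw [sum_ite_eq, if_pos (mem_range.2 (by omega))] at this
  simpa [hf] using this.symm

noncomputable def normalizedHermite (x : ℝ) (n : ℕ) : ℝ :=
  ((hermite n).map (Int.castRingHom ℝ)).eval x / Real.sqrt (n.factorial)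

theorem normalizedHermite_zero (x : ℝ) : normalizedHermite x 0 = 1 := by
  simp [normalizedHermite]

theorem eval_map_hermite_add_two (x : ℝ) (n : ℕ) :
    ((hermite (n + 2)).map (Int.castRingHom ℝ)).eval x =
      x * ((hermite (n + 1)).map (Int.castRingHom ℝ)).eval x -
        (n + 1) * ((hermite n).map (Int.castRingHom ℝ)).eval x := by
  rw [hermite_add_two]
  simp

theorem sqrt_factorial_succ (n : ℕ) :
    Real.sqrt ((n + 1).factorial) = Real.sqrt (n + 1) * Real.sqrt n.factorial := by
  rw [← Real.sqrt_mul (by positivity), Nat.factorial_succ]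
  push_cast
  ring_nf

/-- At `n = 0` the truncated `n - 1` is harmless: its coefficient `√0` vanishes. -/
theorem normalizedHermite_recurrence (x : ℝ) (n : ℕ) :
    Real.sqrt n * normalizedHermite x (n - 1) + Real.sqrt (n + 1) * normalizedHermite x (n + 1) =
      x * normalizedHermite x n := by
  cases n with
  | zero => simp [normalizedHermite]
  | succ n =>
    have hn : Real.sqrt (n + 1) * Real.sqrt (n + 1) = n + 1 := Real.mul_self_sqrt (by positivity)
    have : Real.sqrt (n + 1 + 1) ≠ 0 := by positivity
    simp only [normalizedHermite, Nat.add_sub_cancel, eval_map_hermite_add_two,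
      sqrt_factorial_succ (n + 1), sqrt_factorial_succ n]
    push_cast
    field_simp
    linear_combination ((hermite n).map (Int.castRingHom ℝ)).eval x * hn

theorem Qmat_mul_ofReal (N : ℕ) (j k : Fin (N + 1)) (c : ℝ) :
    Qmat N j k * c = ((1 / Real.sqrt 2) *
      ((if (j : ℕ) = k + 1 then Real.sqrt (k + 1) * c else 0) +
        (if (j : ℕ) + 1 = k then Real.sqrt k * c else 0)) : ℝ) := by
  rw [Qmat, of_apply, ← Complex.ofReal_mul]
  congr 1
  split_ifs <;> ring

theorem Qmat_mulVec_apply (N : ℕ) (g : ℕ → ℝ) (hg : g (N + 1) = 0) (j : Fin (N + 1)) :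
    (Qmat N *ᵥ fun k => (g k : ℂ)) j =
      ((Real.sqrt j * g (j - 1) + Real.sqrt (j + 1) * g (j + 1)) / Real.sqrt 2 : ℝ) := by
  have lower := Finset.sum_range_ite_eq_add_one (fun k => Real.sqrt k * g (k - 1)) (by simp)
    (n := N) (j := j) (by omega)
  have upper := Finset.sum_range_ite_add_one_eq (fun k => Real.sqrt k * g k) (by simp [hg])
    (j := j) (Nat.lt_succ_iff.1 j.2)
  simp only [Nat.add_sub_cancel, Nat.cast_add, Nat.cast_one] at lower upper
  simp only [mulVec, dotProduct, Qmat_mul_ofReal, ← Complex.ofReal_sum, ← Finset.mul_sum,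
    Finset.sum_add_distrib, Fin.sum_univ_eq_sum_range
      (fun k => if (j : ℕ) = k + 1 then Real.sqrt (k + 1) * g k else 0),
    Fin.sum_univ_eq_sum_range (fun k => if (j : ℕ) + 1 = k then Real.sqrt k * g k else 0),
    lower, upper]
  push_cast
  ring

/-- for every real `λ` with `He_{N+1}(√2·λ) = 0`, the vector with components
`v_k = He_k(√2·λ)/√(k!)` is an eigenvector of `Q_N` with eigenvalue `λ`. -/
theorem hermite_eigenvector_of_Qmat (N : ℕ) (lam : ℝ)
    (hroot : ((Polynomial.hermite (N + 1)).map (Int.castRingHom ℝ)).eval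
      (Real.sqrt 2 * lam) = 0) :
    (Qmat N).mulVec
        (fun k : Fin (N+1) =>
          ((((Polynomial.hermite (k : ℕ)).map (Int.castRingHom ℝ)).eval (Real.sqrt 2 * lam) /
            Real.sqrt (Nat.factorial (k : ℕ)) : ℝ) : ℂ)) =
      (lam : ℂ) • (fun k : Fin (N+1) =>
          ((((Polynomial.hermite (k : ℕ)).map (Int.castRingHom ℝ)).eval (Real.sqrt 2 * lam) /
            Real.sqrt (Nat.factorial (k : ℕ)) : ℝ) : ℂ)) ∧
    (fun k : Fin (N+1) =>
        ((((Polynomial.hermite (k : ℕ)).map (Int.castRingHom ℝ)).eval (Real.sqrt 2 * lam) /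
          Real.sqrt (Nat.factorial (k : ℕ)) : ℝ) : ℂ)) ≠ 0 := by
  change Qmat N *ᵥ (fun k : Fin (N + 1) => (normalizedHermite (√2 * lam) k : ℂ)) =
      (lam : ℂ) • (fun k : Fin (N + 1) => (normalizedHermite (√2 * lam) k : ℂ)) ∧
    (fun k : Fin (N + 1) => (normalizedHermite (√2 * lam) k : ℂ)) ≠ 0
  have hlast : normalizedHermite (√2 * lam) (N + 1) = 0 := by
    rw [normalizedHermite, hroot, zero_div]
  refine ⟨funext fun j => ?_, fun hzero => ?_⟩
  · rw [Qmat_mulVec_apply N _ hlast, normalizedHermite_recurrence, Pi.smul_apply, smul_eq_mul,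
      ← Complex.ofReal_mul]
    field_simp
  · simpa [normalizedHermite_zero] using congrFun hzero 0
end

section
/- For every natural number N, every eigenvector of the position matrix Q_N has last component of fixed relative size: if v ∈ ℂ^{N+1} is nonzero and Q_N · v = λ·v for some λ ∈ ℂ, then (N+1)·|v_N|² = Σ_{k=0}^{N} |v_k|². In particular every normalized eigenvector of Q_N has last component of modulus 1/√(N+1). -/
open Matrix Polynomial

/-!
Write `a†` for the truncated creation matrix `e_k ↦ √(k+1) e_{k+1}` (with `e_N ↦ 0`) and `a` for
its adjoint. Then `Q_N = (a† + a)/√2` and `P_N = i(a† − a)/√2`, so `Q_N P_N − P_N Q_N = i(a a† − a† a)`,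
and truncation turns the canonical commutation relation into `a a† − a† a = 1 − (N+1) E_{NN}`.
For a Hermitian matrix `A` and an eigenvector `v`, the expectation `⟨v, [A, B] v⟩` vanishes for
every `B`; with `A = Q_N`, `B = P_N` this reads `‖v‖² − (N+1)|v_N|² = 0`.
-/

open Matrix
open scoped ComplexOrder

namespace Matrix

variable {n : Type*} [Fintype n]

theorem IsHermitian.star_dotProduct_commutator_mulVec_eq_zero {R : Type*} [CommRing R]
    [StarRing R] [PartialOrder R] [StarOrderedRing R] [NoZeroDivisors R]
    {A : Matrix n n R} (hA : A.IsHermitian) (B : Matrix n n R) {v : n → R} {μ : R}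
    (hv : A *ᵥ v = μ • v) :
    star v ⬝ᵥ ((A * B - B * A) *ᵥ v) = 0 := by
  have hleft : ∀ w, star v ⬝ᵥ (A *ᵥ w) = star μ * (star v ⬝ᵥ w) := fun w => by
    rw [dotProduct_mulVec, ← hA.eq, vecMul_conjTranspose, star_star, hv, star_smul,
      smul_dotProduct, smul_eq_mul]
  have hreal : (star μ - μ) * (star v ⬝ᵥ v) = 0 := by
    rw [sub_mul, ← hleft, hv, dotProduct_smul, smul_eq_mul, sub_self]
  rw [sub_mulVec, ← mulVec_mulVec, ← mulVec_mulVec, hv, mulVec_smul, dotProduct_sub, hleft,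
    dotProduct_smul, smul_eq_mul, ← sub_mul]
  rcases mul_eq_zero.1 hreal with h | h
  · rw [h, zero_mul]
  · simp [dotProduct_star_self_eq_zero.1 h]

theorem star_dotProduct_one_sub_smul_single_mulVec {𝕜 : Type*} [RCLike 𝕜] [DecidableEq n]
    (v : n → 𝕜) (c : 𝕜) (i : n) :
    star v ⬝ᵥ ((1 - c • single i i 1) *ᵥ v) = ∑ k, (‖v k‖ : 𝕜) ^ 2 - c * (‖v i‖ : 𝕜) ^ 2 := by
  rw [sub_mulVec, one_mulVec, dotProduct_sub, smul_mulVec, dotProduct_smul, single_mulVec_eq,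
    dotProduct_smul, dotProduct_single_one, smul_eq_mul, smul_eq_mul, one_mul, Pi.star_apply,
    mul_comm (v i), RCLike.star_def, RCLike.conj_mul]
  simp only [dotProduct, Pi.star_apply, RCLike.star_def, RCLike.conj_mul]

end Matrix

noncomputable def creationMat (N : ℕ) : Matrix (Fin (N+1)) (Fin (N+1)) ℂ :=
  Matrix.of fun j k => if (j : ℕ) = (k : ℕ) + 1 then (Real.sqrt ((k : ℕ) + 1) : ℂ) else 0

lemma creationMat_conjTranspose_apply (N : ℕ) (j k : Fin (N+1)) :
    (creationMat N)ᴴ j k = if (j : ℕ) + 1 = (k : ℕ) then (Real.sqrt (k : ℕ) : ℂ) else 0 := by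
  simp only [conjTranspose_apply, creationMat, of_apply]
  split_ifs with h <;> first | omega | simp [h]

lemma Qmat_eq_smul_creationMat_add (N : ℕ) :
    Qmat N = (Real.sqrt 2 : ℂ)⁻¹ • (creationMat N + (creationMat N)ᴴ) := by
  ext j k
  rw [Matrix.smul_apply, Matrix.add_apply, creationMat_conjTranspose_apply]
  simp only [Qmat, creationMat, of_apply]
  split_ifs <;> push_cast <;> ring

lemma Pmat_eq_smul_creationMat_sub (N : ℕ) :
    Pmat N = (Complex.I / Real.sqrt 2) • (creationMat N - (creationMat N)ᴴ) := by
  ext j k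
  rw [Matrix.smul_apply, Matrix.sub_apply, creationMat_conjTranspose_apply]
  simp only [Pmat, creationMat, of_apply]
  split_ifs <;> ring

lemma Qmat_isHermitian (N : ℕ) : (Qmat N).IsHermitian := by
  rw [Qmat_eq_smul_creationMat_add]
  exact (isHermitian_add_transpose_self _).smul (by simp [IsSelfAdjoint])

lemma conjTranspose_creationMat_mul_self (N : ℕ) :
    (creationMat N)ᴴ * creationMat N =
      diagonal fun j : Fin (N+1) => if (j : ℕ) < N then ((j : ℕ) : ℂ) + 1 else 0 := by
  ext ⟨j, hj⟩ ⟨k, hk⟩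
  have hterm : ∀ l : Fin (N+1), (creationMat N)ᴴ ⟨j, hj⟩ l * creationMat N l ⟨k, hk⟩ =
      if j + 1 = l then (if j = k then (j : ℂ) + 1 else 0) else 0 := by
    rintro ⟨l, hl⟩
    rw [creationMat_conjTranspose_apply]
    simp only [creationMat, of_apply]
    split_ifs <;> subst_vars <;>
      first | omega | simp [← Complex.ofReal_mul, Real.mul_self_sqrt, add_nonneg]
  rw [mul_apply, Finset.sum_congr rfl fun l _ => hterm l,
    Fin.sum_univ_eq_sum_range
      (fun l => if j + 1 = l then (if j = k then (j : ℂ) + 1 else 0) else 0),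
    Finset.sum_ite_eq, diagonal_apply]
  simp only [Finset.mem_range, Fin.mk.injEq]
  split_ifs <;> first | rfl | omega

lemma creationMat_mul_conjTranspose_self (N : ℕ) :
    creationMat N * (creationMat N)ᴴ = diagonal fun j : Fin (N+1) => ((j : ℕ) : ℂ) := by
  ext ⟨j, hj⟩ ⟨k, hk⟩
  have hterm : ∀ l : Fin (N+1), creationMat N ⟨j, hj⟩ l * (creationMat N)ᴴ l ⟨k, hk⟩ =
      if (l : ℕ) + 1 = j then (if j = k then (j : ℂ) else 0) else 0 := by
    rintro ⟨l, hl⟩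
    rw [creationMat_conjTranspose_apply]
    simp only [creationMat, of_apply]
    split_ifs <;> subst_vars <;>
      first | omega | simp [← Complex.ofReal_mul, Real.mul_self_sqrt, add_nonneg]
  rw [mul_apply, Finset.sum_congr rfl fun l _ => hterm l,
    Fin.sum_univ_eq_sum_range (fun l => if l + 1 = j then (if j = k then (j : ℂ) else 0) else 0),
    diagonal_apply]
  simp only [Fin.mk.injEq]
  cases j with
  | zero => simp
  | succ m => simp [Finset.sum_ite_eq', show m < N + 1 by omega]

lemma conjTranspose_creationMat_commutator (N : ℕ) :
    (creationMat N)ᴴ * creationMat N - creationMat N * (creationMat N)ᴴ =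
      1 - ((N : ℂ) + 1) • single (Fin.last N) (Fin.last N) 1 := by
  rw [conjTranspose_creationMat_mul_self, creationMat_mul_conjTranspose_self]
  ext ⟨j, hj⟩ ⟨k, hk⟩
  simp only [Matrix.sub_apply, diagonal_apply, Fin.ext_iff, smul_single, smul_eq_mul, mul_one,
    one_apply, single_apply, Fin.val_last]
  rcases eq_or_ne j k with rfl | hjk
  · simp only [and_self, ↓reduceIte]
    split_ifs <;> (try subst_vars) <;> first | (exfalso; omega) | ring
  · rw [if_neg hjk, if_neg hjk, if_neg hjk, if_neg (by omega), sub_zero]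

lemma Qmat_mul_Pmat_sub_Pmat_mul_Qmat (N : ℕ) :
    Qmat N * Pmat N - Pmat N * Qmat N =
      Complex.I • (1 - ((N : ℂ) + 1) • single (Fin.last N) (Fin.last N) 1) := by
  set C := creationMat N
  have hcomm : (C + Cᴴ) * (C - Cᴴ) - (C - Cᴴ) * (C + Cᴴ) = (2 : ℂ) • (Cᴴ * C - C * Cᴴ) := by
    rw [two_smul]
    noncomm_ring
  have hscalar : (Real.sqrt 2 : ℂ)⁻¹ * (Complex.I / Real.sqrt 2) * 2 = Complex.I := by
    have hsq : (Real.sqrt 2 : ℂ) ^ 2 = 2 := by norm_cast; simp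
    field_simp
    rw [hsq]
  rw [Qmat_eq_smul_creationMat_add, Pmat_eq_smul_creationMat_sub, smul_mul_smul_comm,
    smul_mul_smul_comm, mul_comm (Complex.I / _), ← smul_sub, hcomm, smul_smul, hscalar,
    conjTranspose_creationMat_commutator]

theorem eigenvector_last_component_general (N : ℕ) (v : Fin (N+1) → ℂ) (lam : ℂ)
    (heig : (Qmat N).mulVec v = lam • v) :
    ((N : ℝ) + 1) * ‖v (Fin.last N)‖ ^ 2 =
      ∑ k : Fin (N+1), ‖v k‖ ^ 2 := by
  have h := (Qmat_isHermitian N).star_dotProduct_commutator_mulVec_eq_zero (Pmat N) heig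
  rw [Qmat_mul_Pmat_sub_Pmat_mul_Qmat, smul_mulVec, dotProduct_smul, smul_eq_mul,
    star_dotProduct_one_sub_smul_single_mulVec, mul_eq_zero, sub_eq_zero] at h
  apply Complex.ofReal_injective
  push_cast
  exact (h.resolve_left Complex.I_ne_zero).symm

/-- every eigenvector of `Q_N` has last component of fixed relative size:
`(N+1)·|v_N|² = Σ_k |v_k|²`. -/
theorem eigenvector_last_component (N : ℕ) (v : Fin (N+1) → ℂ) (lam : ℂ)
    (hv : v ≠ 0) (heig : (Qmat N).mulVec v = lam • v) :
    ((N : ℝ) + 1) * ‖v (Fin.last N)‖ ^ 2 =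
      ∑ k : Fin (N+1), ‖v k‖ ^ 2 :=
  eigenvector_last_component_general N v lam heig
end

section
/- For every natural number N and every vector ψ ∈ ℂ^{N+1} whose last component vanishes (ψ_N = 0), the expectation value of the action difference equals the squared norm of ψ: ⟨ψ, D_Nψ⟩ = Σ_{k=0}^{N} |ψ_k|², where D_N = (Q_N P_N − P_N Q_N)/i. In particular, for unit vectors supported away from the top Fock level, ⟨ψ, D_Nψ⟩ = 1, recovering the canonical value of the commutator. -/
open Matrix Polynomial

/-!
In terms of the truncated ladder matrices `a` and `a†`, `Q = (a† + a)/√2` and `P = i(a† - a)/√2`,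
so `D = [a, a†]`. Both `a a†` and `a† a` are diagonal, with entries `k + 1` (`0` at the top level `N`,
where truncation cuts off `a†`) and `k`; hence `D = diag(1, …, 1, -N)`, and the whole defect sits on the
last basis vector, which `ψ` does not see.
-/

theorem Fin.sum_ite_eq_val {M : Type*} [AddCommMonoid M] {m : ℕ} (t : ℕ) (f : Fin m → M) :
    ∑ n : Fin m, (if t = n then f n else 0) = if h : t < m then f ⟨t, h⟩ else 0 := by
  split_ifs with h
  · simp_rw [show ∀ n : Fin m, t = n ↔ ⟨t, h⟩ = n from fun n => by simp [Fin.ext_iff],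
      Finset.sum_ite_eq, Finset.mem_univ, if_true]
  · exact Finset.sum_eq_zero fun n _ => if_neg (by have := n.isLt; omega)

theorem Complex.ofReal_sqrt_mul_self {x : ℝ} (hx : 0 ≤ x) :
    (Real.sqrt x : ℂ) * Real.sqrt x = x := by
  rw [← Complex.ofReal_mul, Real.mul_self_sqrt hx]

theorem add_mul_sub_sub_sub_mul_add {R : Type*} [Ring R] (a b : R) :
    (b + a) * (b - a) - (b - a) * (b + a) = 2 • (a * b - b * a) := by
  rw [two_smul]
  noncomm_ring

theorem star_dotProduct_diagonal_mulVec {n : Type*} [Fintype n] [DecidableEq n] (d ψ : n → ℂ) :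
    star ψ ⬝ᵥ diagonal d *ᵥ ψ = ∑ k, d k * (‖ψ k‖ ^ 2 : ℝ) := by
  simp only [dotProduct, mulVec_diagonal, Pi.star_apply]
  refine Finset.sum_congr rfl fun k _ => ?_
  rw [Complex.ofReal_pow, ← Complex.conj_mul', Complex.star_def]
  ring

noncomputable def annihilation (N : ℕ) : Matrix (Fin (N+1)) (Fin (N+1)) ℂ :=
  Matrix.of fun j k => if (j : ℕ) + 1 = k then (Real.sqrt k : ℂ) else 0

noncomputable def creation (N : ℕ) : Matrix (Fin (N+1)) (Fin (N+1)) ℂ :=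
  Matrix.of fun j k => if (j : ℕ) = k + 1 then (Real.sqrt (k + 1) : ℂ) else 0

theorem annihilation_mul_creation (N : ℕ) :
    annihilation N * creation N =
      diagonal fun k : Fin (N + 1) => if (k : ℕ) < N then (k : ℂ) + 1 else 0 := by
  ext j k
  simp only [annihilation, creation, mul_apply, of_apply, ite_mul, zero_mul, Fin.sum_ite_eq_val]
  rcases eq_or_ne j k with rfl | hjk
  · simp [Complex.ofReal_sqrt_mul_self, add_nonneg]
  · simp [hjk, Fin.val_inj]

theorem creation_mul_annihilation (N : ℕ) :
    creation N * annihilation N = diagonal fun k : Fin (N + 1) => (k : ℂ) := by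
  ext ⟨_ | j, hj⟩ k
  · simp [creation, mul_apply, diagonal_apply]
  · simp only [annihilation, creation, mul_apply, of_apply, ite_mul, zero_mul, add_left_inj,
      Fin.sum_ite_eq_val]
    rcases eq_or_ne ⟨j + 1, hj⟩ k with rfl | hjk
    · simp [show j < N + 1 by omega, Complex.ofReal_sqrt_mul_self, add_nonneg]
    · have : j + 1 ≠ k := fun h => hjk (Fin.ext h)
      simp [diagonal_apply_ne _ hjk, this]

theorem Qmat_eq (N : ℕ) : Qmat N = (Real.sqrt 2 : ℂ)⁻¹ • (creation N + annihilation N) := by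
  ext j k
  simp only [Qmat, creation, annihilation, of_apply, Matrix.smul_apply, Matrix.add_apply,
    smul_eq_mul]
  split_ifs <;> push_cast <;> ring

theorem Pmat_eq (N : ℕ) :
    Pmat N = (Complex.I / Real.sqrt 2) • (creation N - annihilation N) := by
  ext j k
  simp only [Pmat, creation, annihilation, of_apply, Matrix.smul_apply, Matrix.sub_apply,
    smul_eq_mul]
  split_ifs <;> ring

theorem Dmat_eq (N : ℕ) :
    Dmat N = annihilation N * creation N - creation N * annihilation N := by
  rw [Dmat, Qmat_eq, Pmat_eq, smul_mul_smul_comm, smul_mul_smul_comm, mul_comm (Complex.I / _),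
    ← smul_sub, add_mul_sub_sub_sub_mul_add, ← Nat.cast_smul_eq_nsmul ℂ, smul_smul, smul_smul]
  convert one_smul ℂ _
  field_simp
  exact_mod_cast (Real.sq_sqrt zero_le_two).symm

/-- if the last component of `ψ` vanishes, then the expectation value of the
action difference equals the squared norm of `ψ`: `⟨ψ, D_N ψ⟩ = Σ_k |ψ_k|²`. -/
theorem action_difference_expectation_of_last_component_zero (N : ℕ)
    (ψ : Fin (N+1) → ℂ) (hlast : ψ (Fin.last N) = 0) :
    star ψ ⬝ᵥ (Dmat N).mulVec ψ =
      ((∑ k : Fin (N+1), ‖ψ k‖ ^ 2 : ℝ) : ℂ) := by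
  rw [Dmat_eq, annihilation_mul_creation, creation_mul_annihilation, diagonal_sub,
    star_dotProduct_diagonal_mulVec, Complex.ofReal_sum]
  refine Finset.sum_congr rfl fun k _ => ?_
  rcases (Fin.le_last k).lt_or_eq with hk | rfl
  · rw [Fin.lt_def, Fin.val_last] at hk
    simp only [hk, if_true, add_sub_cancel_left, one_mul]
  · simp [hlast]
end
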